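/- arXiv:0710.4217 — 5 statements merged into one kernel-verified Lean document; each statement's English description precedes it below -/
import Mathlib

section
/- Suppose there are constants C > 0 and 0 < ρ < 1 such that |corr(Y_i, Y_{i+m})| ≤ C m^{−ρ} for all 1 ≤ i ≤ n − m and all m ≥ 1, and let σ² be a constant with E[Y_i²] ≤ σ² for all i. Then there exists a constant D(ρ) > 0, depending only on ρ and C, such that E[(max_{1≤k≤n} |Σ_{i=1}^k (Y_i − E[Y_i])|)²] ≤ D(ρ)² σ² n^{2−ρ}. -/
/-!
Write `S(a, L) = X_a + ⋯ + X_{a+L-1}` for the block sums of the centred variables and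
`M(a, L) = max_{k ≤ L} |S(a, k)|`. Expanding the variance one summand at a time and comparing
`∑_{m ≤ L} m^{-ρ}` with `L^{1-ρ} / (1 - ρ)`, the correlation decay gives the block bound
`E S(a, L)² ≤ K σ² L^γ` with `γ = 2 - ρ > 1`. Split a block at `h = ⌈L/2⌉`: a partial sum either
stays left of `h`, or is `S(a, h)` plus a partial sum of the right block, so
`M(a, L)² ≤ M(a, h - 1)² + (|S(a, h)| + M(a + h, L - h))²`, where both smaller blocks have length
at most `L / 2`. Since `2 · 2^{-γ} < 1`, a strong induction on `L` (Móricz's argument) bounds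
`E M(a, L)²` by a multiple of `K σ² L^γ` depending only on `γ`.
-/

open MeasureTheory Filter

/-- Covariance of two real random variables. -/
noncomputable def covar {Ω : Type*} [MeasurableSpace Ω] (μ : Measure Ω) (Y Z : Ω → ℝ) : ℝ :=
  ∫ ω, (Y ω - ∫ ω', Y ω' ∂μ) * (Z ω - ∫ ω', Z ω' ∂μ) ∂μ

/-- Variance of a real random variable. -/
noncomputable def variance' {Ω : Type*} [MeasurableSpace Ω] (μ : Measure Ω) (Y : Ω → ℝ) : ℝ :=
  covar μ Y Y

open Finset

namespace Real

theorem one_sub_mul_rpow_neg_le {ρ x : ℝ} (hρ0 : 0 ≤ ρ) (hρ1 : ρ ≤ 1) (hx : 1 ≤ x) :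
    (1 - ρ) * x ^ (-ρ) ≤ x ^ (1 - ρ) - (x - 1) ^ (1 - ρ) := by
  have hx0 : 0 < x := by linarith
  have bernoulli := rpow_one_add_le_one_add_mul_self (s := -x⁻¹)
    (by linarith [inv_le_one_of_one_le₀ hx]) (p := 1 - ρ) (by linarith) (by linarith)
  have hsplit : x - 1 = x * (1 + -x⁻¹) := by field_simp; ring
  have hneg : x ^ (-ρ) = x ^ (1 - ρ) * x⁻¹ := by
    rw [← rpow_neg_one, ← rpow_add hx0]; ring_nf
  rw [hsplit, mul_rpow hx0.le (by linarith [inv_le_one_of_one_le₀ hx]), hneg]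
  nlinarith [rpow_nonneg hx0.le (1 - ρ)]

theorem one_sub_mul_sum_range_rpow_neg_le {ρ : ℝ} (hρ0 : 0 ≤ ρ) (hρ1 : ρ < 1) (L : ℕ) :
    (1 - ρ) * ∑ m ∈ range L, ((m : ℝ) + 1) ^ (-ρ) ≤ (L : ℝ) ^ (1 - ρ) := by
  have htel : ∑ m ∈ range L, (((m + 1 : ℕ) : ℝ) ^ (1 - ρ) - (m : ℝ) ^ (1 - ρ))
      = (L : ℝ) ^ (1 - ρ) := by
    rw [sum_range_sub (fun m : ℕ => (m : ℝ) ^ (1 - ρ))]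
    simp [zero_rpow (by linarith : (1 - ρ) ≠ 0)]
  rw [mul_sum, ← htel]
  gcongr with m
  have := one_sub_mul_rpow_neg_le hρ0 hρ1.le (x := (m : ℝ) + 1) (by simp)
  simpa using this

end Real

theorem add_sq_le_div_mul_sq_add_mul_sq {r : ℝ} (hr : 1 < r) (x y : ℝ) :
    (x + y) ^ 2 ≤ r / (r - 1) * x ^ 2 + r * y ^ 2 := by
  have hr1 : 0 < r - 1 := by linarith
  rw [div_mul_eq_mul_div, ← sub_nonneg]
  have key : r * x ^ 2 / (r - 1) + r * y ^ 2 - (x + y) ^ 2 = (x - (r - 1) * y) ^ 2 / (r - 1) := by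
    field_simp; ring
  rw [key]; positivity

theorem Nat.cast_rpow_le_div_two_rpow {γ : ℝ} (hγ : 0 ≤ γ) {ℓ L : ℕ} (h : 2 * ℓ ≤ L) :
    (ℓ : ℝ) ^ γ ≤ (L : ℝ) ^ γ / 2 ^ γ := by
  rw [← Real.div_rpow (Nat.cast_nonneg L) zero_le_two]
  gcongr
  rw [le_div_iff₀ zero_lt_two]
  exact_mod_cast (by omega : ℓ * 2 ≤ L)

section Covariance

open ProbabilityTheory

variable {Ω : Type*} {mΩ : MeasurableSpace Ω} {μ : Measure Ω}
  {Z : ℕ → Ω → ℝ} {C ρ σsq : ℝ}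

theorem covariance_sum_range_le [IsFiniteMeasure μ] (hρ0 : 0 ≤ ρ) (hρ1 : ρ < 1)
    (hZ : ∀ i, MemLp (Z i) 2 μ) (hCσ : 0 ≤ C * σsq) {L : ℕ}
    (hcov : ∀ i < L, |cov[Z i, Z L; μ]| ≤ C * σsq * ((L - i : ℕ) : ℝ) ^ (-ρ)) :
    (1 - ρ) * cov[∑ i ∈ range L, Z i, Z L; μ] ≤ C * σsq * (L : ℝ) ^ (1 - ρ) := by
  have hsum : ∑ i ∈ range L, ((L - i : ℕ) : ℝ) ^ (-ρ) = ∑ m ∈ range L, ((m : ℝ) + 1) ^ (-ρ) := by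
    rw [← sum_range_reflect]
    refine sum_congr rfl fun i hi => ?_
    rw [show L - (L - 1 - i) = i + 1 by rw [mem_range] at hi; omega]
    simp
  have hcross :
      cov[∑ i ∈ range L, Z i, Z L; μ] ≤ C * σsq * ∑ m ∈ range L, ((m : ℝ) + 1) ^ (-ρ) := by
    rw [covariance_sum_left' (fun i _ => hZ i) (hZ L), ← hsum, mul_sum]
    exact sum_le_sum fun i hi => (le_abs_self _).trans (hcov i (mem_range.mp hi))
  calc (1 - ρ) * cov[∑ i ∈ range L, Z i, Z L; μ]
      ≤ (1 - ρ) * (C * σsq * ∑ m ∈ range L, ((m : ℝ) + 1) ^ (-ρ)) := by gcongr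
    _ = C * σsq * ((1 - ρ) * ∑ m ∈ range L, ((m : ℝ) + 1) ^ (-ρ)) := by ring
    _ ≤ C * σsq * (L : ℝ) ^ (1 - ρ) := by
        gcongr; exact Real.one_sub_mul_sum_range_rpow_neg_le hρ0 hρ1 L

theorem variance_sum_range_le [IsFiniteMeasure μ] (hC : 0 ≤ C) (hρ0 : 0 ≤ ρ) (hρ1 : ρ < 1)
    (hZ : ∀ i, MemLp (Z i) 2 μ) {L : ℕ} (hvar : ∀ i < L, Var[Z i; μ] ≤ σsq)
    (hcov : ∀ i j, i < j → j < L → |cov[Z i, Z j; μ]| ≤ C * σsq * ((j - i : ℕ) : ℝ) ^ (-ρ)) :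
    Var[∑ i ∈ range L, Z i; μ] ≤ (1 + 2 * C / (1 - ρ)) * σsq * (L : ℝ) ^ (2 - ρ) := by
  have h1ρ : 0 < 1 - ρ := by linarith
  set K := 1 + 2 * C / (1 - ρ)
  have hK : 1 ≤ K := le_add_of_nonneg_right (by positivity)
  have hK1 : (K - 1) * (1 - ρ) = 2 * C := by simp only [K]; field_simp; ring
  clear_value K
  suffices Var[∑ i ∈ range L, Z i; μ] ≤ K * σsq * (L * (L : ℝ) ^ (1 - ρ)) by
    rwa [← Real.rpow_one_add' (Nat.cast_nonneg L) (by linarith), show 1 + (1 - ρ) = 2 - ρ by ring]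
      at this
  induction L with
  | zero => simp
  | succ L ih =>
    have hσ : 0 ≤ σsq := (variance_nonneg _ _).trans (hvar L (by omega))
    have hKσ : 0 ≤ (K - 1) * σsq := mul_nonneg (by linarith) hσ
    have hprev := ih (fun i hi => hvar i (by omega)) fun i j hij hj => hcov i j hij (by omega)
    have hcross : 2 * cov[∑ i ∈ range L, Z i, Z L; μ] ≤ (K - 1) * σsq * (L : ℝ) ^ (1 - ρ) := by
      have := covariance_sum_range_le hρ0 hρ1 hZ (mul_nonneg hC hσ)
        fun i hi => hcov i L hi (by omega)
      refine le_of_mul_le_mul_left ?_ h1ρ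
      linear_combination 2 * this - σsq * (L : ℝ) ^ (1 - ρ) * hK1
    have hmono : (L : ℝ) ^ (1 - ρ) ≤ ((L + 1 : ℕ) : ℝ) ^ (1 - ρ) := by gcongr; simp
    have hone : 1 ≤ ((L + 1 : ℕ) : ℝ) ^ (1 - ρ) := Real.one_le_rpow (by simp) h1ρ.le
    rw [sum_range_succ, variance_add (memLp_finsetSum' _ fun i _ => hZ i) (hZ L)]
    calc Var[∑ i ∈ range L, Z i; μ] + 2 * cov[∑ i ∈ range L, Z i, Z L; μ] + Var[Z L; μ]
        ≤ K * σsq * (L * (L : ℝ) ^ (1 - ρ)) + (K - 1) * σsq * (L : ℝ) ^ (1 - ρ) + σsq :=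
          add_le_add (add_le_add hprev hcross) (hvar L (by omega))
      _ ≤ K * σsq * (L * ((L + 1 : ℕ) : ℝ) ^ (1 - ρ)) + (K - 1) * σsq * ((L + 1 : ℕ) : ℝ) ^ (1 - ρ)
          + σsq * ((L + 1 : ℕ) : ℝ) ^ (1 - ρ) := by
          gcongr
          exact le_mul_of_one_le_right hσ hone
      _ = K * σsq * ((L + 1 : ℕ) * ((L + 1 : ℕ) : ℝ) ^ (1 - ρ)) := by push_cast; ring

theorem integral_sq_sum_sub_integral {ι : Type*} (s : Finset ι) {Z : ι → Ω → ℝ}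
    (hZ : ∀ i ∈ s, Integrable (Z i) μ) :
    ∫ ω, (∑ i ∈ s, (Z i ω - μ[Z i])) ^ 2 ∂μ = Var[∑ i ∈ s, Z i; μ] := by
  rw [variance_eq_integral (s.aemeasurable_sum fun i hi => (hZ i hi).aemeasurable)]
  simp only [Finset.sum_apply, integral_finsetSum s hZ, sum_sub_distrib]

theorem abs_covariance_le_of_variance_le [IsFiniteMeasure μ] {Y Z : Ω → ℝ}
    (hY : AEMeasurable Y μ) (hZ : AEMeasurable Z μ) {c σsq : ℝ} (hc : 0 ≤ c)
    (hσY : Var[Y; μ] ≤ σsq) (hσZ : Var[Z; μ] ≤ σsq)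
    (h : |covar μ Y Z| ≤ c * √(variance' μ Y) * √(variance' μ Z)) :
    |cov[Y, Z; μ]| ≤ c * σsq := by
  have hσ : 0 ≤ σsq := (variance_nonneg Y μ).trans hσY
  have hsd : √(variance' μ Y) * √(variance' μ Z) ≤ σsq := by
    rw [← Real.mul_self_sqrt hσ]
    unfold variance' covar
    rw [← covariance, ← covariance, covariance_self hY, covariance_self hZ]
    gcongr
  calc |cov[Y, Z; μ]| ≤ c * √(variance' μ Y) * √(variance' μ Z) := h
    _ ≤ c * σsq := by rw [mul_assoc]; gcongr

end Covariance

section MaximalPartialSums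

variable {Ω : Type*} {mΩ : MeasurableSpace Ω} {μ : Measure Ω} (X : ℕ → Ω → ℝ)

def partialSum (a k : ℕ) (ω : Ω) : ℝ := ∑ i ∈ range k, X (a + i) ω

def maxPartialSum (a L : ℕ) (ω : Ω) : ℝ :=
  (range (L + 1)).sup' nonempty_range_add_one fun k => |partialSum X a k ω|

variable {X}

theorem partialSum_add (a k l : ℕ) (ω : Ω) :
    partialSum X a (k + l) ω = partialSum X a k ω + partialSum X (a + k) l ω := by
  simp only [partialSum, sum_range_add, add_assoc]

theorem abs_partialSum_le_maxPartialSum {a k L : ℕ} (hk : k ≤ L) (ω : Ω) :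
    |partialSum X a k ω| ≤ maxPartialSum X a L ω :=
  le_sup' (fun k => |partialSum X a k ω|) (mem_range.mpr (Nat.lt_succ_of_le hk))

theorem maxPartialSum_nonneg (a L : ℕ) (ω : Ω) : 0 ≤ maxPartialSum X a L ω :=
  (abs_nonneg _).trans (abs_partialSum_le_maxPartialSum (Nat.zero_le L) ω)

theorem maxPartialSum_zero (a : ℕ) (ω : Ω) : maxPartialSum X a 0 ω = 0 := by
  simp [maxPartialSum, partialSum]

theorem maxPartialSum_le_max {a h L : ℕ} (hh : h ≤ L) (ω : Ω) :
    maxPartialSum X a L ω ≤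
      max (maxPartialSum X a (h - 1) ω)
        (|partialSum X a h ω| + maxPartialSum X (a + h) (L - h) ω) := by
  refine sup'_le _ _ fun k hk => ?_
  rw [mem_range] at hk
  rcases lt_or_ge k h with hkh | hkh
  · exact le_max_of_le_left (abs_partialSum_le_maxPartialSum (by omega) ω)
  · obtain ⟨l, rfl⟩ := Nat.exists_eq_add_of_le hkh
    refine le_max_of_le_right ?_
    rw [partialSum_add]
    exact (abs_add_le _ _).trans (by gcongr; exact abs_partialSum_le_maxPartialSum (by omega) ω)

theorem memLp_partialSum (hX : ∀ i, MemLp (X i) 2 μ) (a k : ℕ) :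
    MemLp (partialSum X a k) 2 μ :=
  memLp_finsetSum (range k) fun i _ => hX (a + i)

theorem memLp_maxPartialSum (hX : ∀ i, MemLp (X i) 2 μ) (a L : ℕ) :
    MemLp (maxPartialSum X a L) 2 μ := by
  have := sup'_induction (p := fun f : Ω → ℝ => MemLp f 2 μ) (nonempty_range_add_one (n := L))
    (fun k ω => |partialSum X a k ω|) (fun _ hf _ hg => hf.sup hg)
    fun k _ => (memLp_partialSum hX a k).abs
  convert this using 1
  ext ω
  simp [maxPartialSum, Finset.sup'_apply]

theorem sup'_abs_sum_Icc_le_maxPartialSum {n : ℕ} (hn : (Icc 1 n).Nonempty) (ω : Ω) :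
    (Icc 1 n).sup' hn (fun k => |∑ i ∈ Icc 1 k, X i ω|)
      ≤ maxPartialSum (fun i => X (1 + i)) 0 n ω := by
  refine sup'_le _ _ fun k hk => ?_
  have hsum : ∑ i ∈ Icc 1 k, X i ω = partialSum (fun i => X (1 + i)) 0 k ω := by
    rw [partialSum, ← Ico_add_one_right_eq_Icc, sum_Ico_eq_sum_range]
    simp
  rw [hsum]
  exact abs_partialSum_le_maxPartialSum (mem_Icc.mp hk).2 ω

theorem sq_maxPartialSum_le {r : ℝ} (hr : 1 < r) {a h L : ℕ} (hh : h ≤ L) (ω : Ω) :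
    maxPartialSum X a L ω ^ 2 ≤ maxPartialSum X a (h - 1) ω ^ 2
      + r / (r - 1) * partialSum X a h ω ^ 2 + r * maxPartialSum X (a + h) (L - h) ω ^ 2 := by
  set M₁ := maxPartialSum X a (h - 1) ω
  set M₂ := maxPartialSum X (a + h) (L - h) ω
  set T := partialSum X a h ω
  have hM := maxPartialSum_nonneg (X := X) a L ω
  calc maxPartialSum X a L ω ^ 2 ≤ M₁ ^ 2 + (|T| + M₂) ^ 2 := by
        rcases le_max_iff.mp (maxPartialSum_le_max (X := X) hh ω) with hle | hle
        · nlinarith [pow_le_pow_left₀ hM hle 2, sq_nonneg (|T| + M₂)]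
        · nlinarith [pow_le_pow_left₀ hM hle 2, sq_nonneg M₁]
    _ ≤ M₁ ^ 2 + (r / (r - 1) * T ^ 2 + r * M₂ ^ 2) := by
        gcongr
        simpa only [sq_abs] using add_sq_le_div_mul_sq_add_mul_sq hr |T| M₂
    _ = _ := by ring

theorem integral_sq_maxPartialSum_le_split (hX : ∀ i, MemLp (X i) 2 μ) {r : ℝ} (hr : 1 < r)
    {a h L : ℕ} (hh : h ≤ L) :
    ∫ ω, maxPartialSum X a L ω ^ 2 ∂μ ≤ ∫ ω, maxPartialSum X a (h - 1) ω ^ 2 ∂μ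
      + r / (r - 1) * ∫ ω, partialSum X a h ω ^ 2 ∂μ
      + r * ∫ ω, maxPartialSum X (a + h) (L - h) ω ^ 2 ∂μ := by
  have hM1 := (memLp_maxPartialSum hX a (h - 1)).integrable_sq
  have hT := ((memLp_partialSum hX a h).integrable_sq).const_mul (r / (r - 1))
  have hM2 := ((memLp_maxPartialSum hX (a + h) (L - h)).integrable_sq).const_mul r
  have hM1T : Integrable (fun ω => maxPartialSum X a (h - 1) ω ^ 2
      + r / (r - 1) * partialSum X a h ω ^ 2) μ := hM1.add hT
  rw [← integral_const_mul, ← integral_const_mul, ← integral_add hM1 hT, ← integral_add hM1T hM2]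
  exact integral_mono_of_nonneg (.of_forall fun ω => sq_nonneg _) (hM1T.add hM2)
    (.of_forall (sq_maxPartialSum_le hr hh))

-- With `r = 2 ^ (γ - 1)`, this is the fixed point `c = (1 + r) c / 2 ^ γ + r / (r - 1)` of the
-- bisection recursion in `integral_sq_maxPartialSum_le`.
noncomputable def moriczConst (γ : ℝ) : ℝ := 2 * (2 ^ (γ - 1)) ^ 2 / (2 ^ (γ - 1) - 1) ^ 2

theorem moriczConst_pos {γ : ℝ} (hγ : 1 < γ) : 0 < moriczConst γ := by
  have : 1 < (2 : ℝ) ^ (γ - 1) := Real.one_lt_rpow (by norm_num) (by linarith)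
  unfold moriczConst
  have : (2 : ℝ) ^ (γ - 1) - 1 ≠ 0 := by linarith
  positivity

theorem integral_sq_maxPartialSum_le (hX : ∀ i, MemLp (X i) 2 μ) {γ B : ℝ} (hγ : 1 < γ)
    (hB : 0 ≤ B) {n : ℕ}
    (hS : ∀ a L, a + L ≤ n → ∫ ω, partialSum X a L ω ^ 2 ∂μ ≤ B * (L : ℝ) ^ γ)
    {a L : ℕ} (haL : a + L ≤ n) :
    ∫ ω, maxPartialSum X a L ω ^ 2 ∂μ ≤ moriczConst γ * B * (L : ℝ) ^ γ := by
  set r : ℝ := 2 ^ (γ - 1)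
  have hr : 1 < r := Real.one_lt_rpow (by norm_num) (by linarith)
  have htwo : (2 : ℝ) ^ γ = 2 * r := by
    simp only [r, Real.rpow_sub_one two_ne_zero]; ring
  set c := moriczConst γ
  have hc_def : c = 2 * r ^ 2 / (r - 1) ^ 2 := rfl
  have hc : 0 ≤ c := (moriczConst_pos hγ).le
  have hc_eq : c / (2 * r) + r / (r - 1) + r * (c / (2 * r)) = c := by
    have : r - 1 ≠ 0 := by linarith
    rw [hc_def]; field_simp; ring
  induction L using Nat.strong_induction_on generalizing a with
  | _ L ih =>
  rcases Nat.eq_zero_or_pos L with rfl | hL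
  · simp [maxPartialSum_zero, Real.zero_rpow (by linarith : γ ≠ 0)]
  set h := (L + 1) / 2
  have hM1 := ih (h - 1) (by omega) (a := a) (by omega)
  have hT := hS a h (by omega)
  have hM2 := ih (L - h) (by omega) (a := a + h) (by omega)
  have e1 : ((h - 1 : ℕ) : ℝ) ^ γ ≤ (L : ℝ) ^ γ / (2 * r) := by
    rw [← htwo]; exact Nat.cast_rpow_le_div_two_rpow (by linarith) (by omega)
  have e2 : (h : ℝ) ^ γ ≤ (L : ℝ) ^ γ := by gcongr; omega
  have e3 : ((L - h : ℕ) : ℝ) ^ γ ≤ (L : ℝ) ^ γ / (2 * r) := by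
    rw [← htwo]; exact Nat.cast_rpow_le_div_two_rpow (by linarith) (by omega)
  calc ∫ ω, maxPartialSum X a L ω ^ 2 ∂μ
      ≤ ∫ ω, maxPartialSum X a (h - 1) ω ^ 2 ∂μ + r / (r - 1) * ∫ ω, partialSum X a h ω ^ 2 ∂μ
        + r * ∫ ω, maxPartialSum X (a + h) (L - h) ω ^ 2 ∂μ :=
        integral_sq_maxPartialSum_le_split hX hr (by omega)
    _ ≤ c * B * ((L : ℝ) ^ γ / (2 * r)) + r / (r - 1) * (B * (L : ℝ) ^ γ)
        + r * (c * B * ((L : ℝ) ^ γ / (2 * r))) := by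
        have hr' : 0 ≤ r / (r - 1) := div_nonneg (by linarith) (by linarith)
        have b1 := hM1.trans (by gcongr : c * B * _ ≤ c * B * ((L : ℝ) ^ γ / (2 * r)))
        have b2 := hT.trans (by gcongr : B * _ ≤ B * (L : ℝ) ^ γ)
        have b3 := hM2.trans (by gcongr : c * B * _ ≤ c * B * ((L : ℝ) ^ γ / (2 * r)))
        gcongr
    _ = c * B * (L : ℝ) ^ γ := by
        linear_combination (B * (L : ℝ) ^ γ) * hc_eq

end MaximalPartialSums

section CorrelationDecay

open ProbabilityTheory

variable {Ω : Type*} {mΩ : MeasurableSpace Ω} {μ : Measure Ω} [IsProbabilityMeasure μ]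

theorem integral_sq_partialSum_le {Y : ℕ → Ω → ℝ} (hY : ∀ i, MemLp (Y i) 2 μ)
    {C ρ σsq : ℝ} (hC : 0 ≤ C) (hρ0 : 0 ≤ ρ) (hρ1 : ρ < 1) {n : ℕ}
    (hcov : ∀ i m : ℕ, 1 ≤ i → 1 ≤ m → i + m ≤ n →
      |covar μ (Y i) (Y (i + m))| ≤ C * (m : ℝ) ^ (-ρ) *
        √(variance' μ (Y i)) * √(variance' μ (Y (i + m))))
    (hσ : ∀ i, 1 ≤ i → i ≤ n → ∫ ω, Y i ω ^ 2 ∂μ ≤ σsq)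
    {a L : ℕ} (haL : a + L ≤ n) :
    ∫ ω, partialSum (fun i ω => Y (1 + i) ω - μ[Y (1 + i)]) a L ω ^ 2 ∂μ
      ≤ (1 + 2 * C / (1 - ρ)) * σsq * (L : ℝ) ^ (2 - ρ) := by
  have hvar : ∀ i, 1 ≤ i → i ≤ n → Var[Y i; μ] ≤ σsq := fun i h1 h2 =>
    (variance_le_expectation_sq (hY i).aestronglyMeasurable).trans (hσ i h1 h2)
  unfold partialSum
  rw [integral_sq_sum_sub_integral (range L) fun i _ => (hY _).integrable one_le_two]
  refine variance_sum_range_le hC hρ0 hρ1 (fun i => hY (1 + (a + i)))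
    (fun i hi => hvar _ (by omega) (by omega)) fun i j hij hj => ?_
  have hij' : 1 + (a + i) + (j - i) = 1 + (a + j) := by omega
  have := hcov (1 + (a + i)) (j - i) (by omega) (by omega) (by omega)
  rw [hij'] at this
  rw [mul_right_comm]
  exact abs_covariance_le_of_variance_le (hY _).aemeasurable (hY _).aemeasurable
    (by positivity) (hvar _ (by omega) (by omega)) (hvar _ (by omega) (by omega)) this

end CorrelationDecay

/-- **Lemma 1** (maximal inequality): if the correlations of the square-integrable
sequence `(Y_i)_{1≤i≤n}` decay like `C m^{-ρ}` with `0 < ρ < 1`, and `E[Y_i²] ≤ σ²`,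
then `E[(max_{1≤k≤n} |Σ_{i=1}^k (Y_i − E Y_i)|)²] ≤ D(ρ)² σ² n^{2−ρ}` for a constant
`D(ρ) > 0` depending only on `ρ` and `C`. -/
theorem maximal_inequality_polynomial_decay (C ρ : ℝ) (hC : 0 < C) (hρ0 : 0 < ρ) (hρ1 : ρ < 1) :
    ∃ D : ℝ, 0 < D ∧
      ∀ (Ω : Type*) [MeasurableSpace Ω] (ℙ : Measure Ω) [IsProbabilityMeasure ℙ]
        (n : ℕ) (hn : 1 ≤ n) (Y : ℕ → Ω → ℝ),
        (∀ i, Measurable (Y i)) →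
        (∀ i, MemLp (Y i) 2 ℙ) →
        -- the correlation (covariance) decay assumption
        (∀ i m : ℕ, 1 ≤ i → 1 ≤ m → i + m ≤ n →
          |covar ℙ (Y i) (Y (i + m))| ≤ C * (m : ℝ) ^ (-ρ) *
            Real.sqrt (variance' ℙ (Y i)) * Real.sqrt (variance' ℙ (Y (i + m)))) →
        ∀ σsq : ℝ,
        -- the second-moment bound `E[Y_i²] ≤ σ²`
        (∀ i, 1 ≤ i → i ≤ n → ∫ ω, (Y i ω) ^ 2 ∂ℙ ≤ σsq) →
        ∫ ω, ((Finset.Icc 1 n).sup' (Finset.nonempty_Icc.mpr hn)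
            (fun k => |∑ i ∈ Finset.Icc 1 k, (Y i ω - ∫ ω', Y i ω' ∂ℙ)|)) ^ 2 ∂ℙ ≤
          D ^ 2 * σsq * (n : ℝ) ^ ((2 : ℝ) - ρ) := by
  have h1ρ : 0 < 1 - ρ := by linarith
  have hγ : 1 < 2 - ρ := by linarith
  set K := 1 + 2 * C / (1 - ρ)
  have hK : 0 < K := by positivity
  refine ⟨√(moriczConst (2 - ρ) * K), Real.sqrt_pos.mpr (mul_pos (moriczConst_pos hγ) hK), ?_⟩
  intro Ω _ ℙ _ n hn Y _ hY hcov σsq hσ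
  have hσ0 : 0 ≤ σsq := (integral_nonneg fun ω => sq_nonneg _).trans (hσ 1 le_rfl hn)
  set X : ℕ → Ω → ℝ := fun i ω => Y (1 + i) ω - ∫ ω', Y (1 + i) ω' ∂ℙ
  have hX : ∀ i, MemLp (X i) 2 ℙ := fun i => (hY (1 + i)).sub (memLp_const _)
  have hmax := integral_sq_maxPartialSum_le hX hγ (mul_nonneg hK.le hσ0)
    (fun a L haL => integral_sq_partialSum_le hY hC.le hρ0.le hρ1 hcov hσ haL) (a := 0) (L := n)
    (by simp)
  calc _ ≤ ∫ ω, maxPartialSum X 0 n ω ^ 2 ∂ℙ := by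
        refine integral_mono_of_nonneg (.of_forall fun _ => sq_nonneg _)
          (memLp_maxPartialSum hX 0 n).integrable_sq (.of_forall fun ω => pow_le_pow_left₀
            (le_sup'_of_le _ (mem_Icc.mpr ⟨hn, le_rfl⟩) (abs_nonneg _)) ?_ 2)
        exact sup'_abs_sum_Icc_le_maxPartialSum (X := fun i ω => Y i ω - ∫ ω', Y i ω' ∂ℙ) _ ω
    _ ≤ moriczConst (2 - ρ) * (K * σsq) * (n : ℝ) ^ (2 - ρ) := hmax
    _ = _ := by rw [Real.sq_sqrt (mul_pos (moriczConst_pos hγ) hK).le]; ring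
end

section
/- Let G ⊆ (0,1), let θ, θ̂ ∈ G, let B : G → V, δ ∈ V, and h : G → [0, ∞) with h(θ) > 0, and suppose there is a constant C_h > 0 with 1 − h(t)/h(θ) ≥ C_h·|t − θ| for all t ∈ G. Set D(t) = B(t) + h(t)·δ. If N(D(θ̂)) ≥ N(D(θ)), then N(B(θ̂) − B(θ)) ≥ C_h·|θ̂ − θ|·(h(θ)·N(δ) − 2·N(B(θ))). -/
/-- **Abstract key inequality for the rates proof** (inequality (4.27)): if `θ̂`
maximizes `N(D(t))` at least as well as `θ`, where `D(t) = B(t) + h(t)·δ`, and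
`1 − h(t)/h(θ) ≥ C_h |t − θ|` on `G`, then
`N(B(θ̂) − B(θ)) ≥ C_h |θ̂ − θ| (h(θ) N(δ) − 2 N(B(θ)))`. -/
theorem seminorm_changepoint_key_inequality
    {V : Type*} [AddCommGroup V] [Module ℝ V]
    (N : V → ℝ)
    (hN_nonneg : ∀ v, 0 ≤ N v)
    (hN_smul : ∀ (r : ℝ) (v : V), N (r • v) = |r| * N v)
    (hN_add : ∀ u v : V, N (u + v) ≤ N u + N v)
    (G : Set ℝ) (hG : G ⊆ Set.Ioo 0 1)
    (θ θhat : ℝ) (hθ : θ ∈ G) (hθhat : θhat ∈ G)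
    (B : ℝ → V) (δ : V)
    (h : ℝ → ℝ) (hh_nonneg : ∀ t ∈ G, 0 ≤ h t) (hhθ : 0 < h θ)
    (Ch : ℝ) (hCh : 0 < Ch)
    (hlin : ∀ t ∈ G, Ch * |t - θ| ≤ 1 - h t / h θ)
    (hmax : N (B θ + h θ • δ) ≤ N (B θhat + h θhat • δ)) :
    Ch * |θhat - θ| * (h θ * N δ - 2 * N (B θ)) ≤ N (B θhat - B θ) := by

  set r : ℝ := h θhat / h θ with hr_def
  have hr0 : 0 ≤ r := div_nonneg (hh_nonneg θhat hθhat) hhθ.le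
  have hr1 : Ch * |θhat - θ| ≤ 1 - r := hlin θhat hθhat
  have hkey : B θhat + h θhat • δ = (B θhat - r • B θ) + r • (B θ + h θ • δ) := by
    have : r * h θ = h θhat := by rw [hr_def, div_mul_cancel₀ _ hhθ.ne']
    rw [smul_add, smul_smul, this]
    abel
  -- N(Dθ) ≤ N(B θhat - r • B θ) + r * N(Dθ)
  have h1 : N (B θ + h θ • δ) ≤ N (B θhat - r • B θ) + r * N (B θ + h θ • δ) := by
    calc N (B θ + h θ • δ) ≤ N (B θhat + h θhat • δ) := hmax
    _ = N ((B θhat - r • B θ) + r • (B θ + h θ • δ)) := by rw [hkey]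
    _ ≤ N (B θhat - r • B θ) + N (r • (B θ + h θ • δ)) := hN_add _ _
    _ = N (B θhat - r • B θ) + r * N (B θ + h θ • δ) := by
        rw [hN_smul, abs_of_nonneg hr0]
  have h2 : N (B θhat - r • B θ) ≤ N (B θhat - B θ) + (1 - r) * N (B θ) := by
    have hid : B θhat - r • B θ = (B θhat - B θ) + (1 - r) • B θ := by
      rw [sub_smul, one_smul]; abel
    calc N (B θhat - r • B θ) = N ((B θhat - B θ) + (1 - r) • B θ) := by rw [hid]
    _ ≤ N (B θhat - B θ) + N ((1 - r) • B θ) := hN_add _ _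
    _ = N (B θhat - B θ) + (1 - r) * N (B θ) := by
        rw [hN_smul, abs_of_nonneg (by nlinarith [hN_nonneg (B θhat), abs_nonneg (θhat - θ)] : (0:ℝ) ≤ 1 - r)]
  have h3 : h θ * N δ - N (B θ) ≤ N (B θ + h θ • δ) := by
    have : N (h θ • δ) ≤ N (B θ + h θ • δ) + N (B θ) := by
      have hid : h θ • δ = (B θ + h θ • δ) + (-1 : ℝ) • B θ := by
        rw [neg_smul, one_smul]; abel
      have ht := hN_add (B θ + h θ • δ) ((-1 : ℝ) • B θ)
      have hneg : N ((-1 : ℝ) • B θ) = N (B θ) := by rw [hN_smul]; norm_num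
      rw [← hid, hneg] at ht
      exact ht
    rw [hN_smul, abs_of_nonneg hhθ.le] at this
    linarith
  have hCa : 0 ≤ Ch * |θhat - θ| := mul_nonneg hCh.le (abs_nonneg _)
  rcases le_or_gt (h θ * N δ - 2 * N (B θ)) 0 with hE | hE
  · calc Ch * |θhat - θ| * (h θ * N δ - 2 * N (B θ)) ≤ 0 :=
        mul_nonpos_of_nonneg_of_nonpos hCa hE
    _ ≤ N (B θhat - B θ) := hN_nonneg _
  · -- (1-r)*(Dθ - N Bθ) ≤ N(Bθhat - Bθ)
    have h4 : (1 - r) * (N (B θ + h θ • δ) - N (B θ)) ≤ N (B θhat - B θ) := by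
      nlinarith
    have h5 : (1 - r) * (h θ * N δ - 2 * N (B θ)) ≤ (1 - r) * (N (B θ + h θ • δ) - N (B θ)) := by
      have h1r : 0 ≤ 1 - r := le_trans hCa hr1
      nlinarith
    nlinarith
end

section
/- There exists a constant C_h > 0, depending only on θ and γ, such that 1 − h(t)/h(θ) ≥ C_h·|t − θ| for all t ∈ (0,1). -/
/-- The deterministic drift function
`h(t) = (t(1−t))^{−γ}·t·(1−θ)` for `t ≤ θ` and `(t(1−t))^{−γ}·θ·(1−t)` for `t > θ`. -/
noncomputable def driftFun (θ γ : ℝ) (t : ℝ) : ℝ :=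
  if t ≤ θ then (t * (1 - t)) ^ (-γ) * (t * (1 - θ)) else (t * (1 - t)) ^ (-γ) * (θ * (1 - t))

/-!
With `b = θ(1-θ)`, one has `h(θ) = b^{1-γ}` and `h(t) ≤ m^{1-γ}`, where `m = t(1-θ)` for `t ≤ θ`
and `m = θ(1-t)` for `t > θ`: the factor `(t(1-t))^{-γ}` only grows when `t(1-t)` is replaced
by the smaller `m`. Bernoulli's inequality for the concave power `x ↦ x^{1-γ}` then gives
`1 - h(t)/h(θ) ≥ 1 - (m/b)^{1-γ} ≥ (1-γ)(1 - m/b)`, and `1 - m/b` is `(θ-t)/θ` or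
`(t-θ)/(1-θ)`, both at least `|t-θ|`. So `C_h = 1 - γ` works.
-/

open Real

lemma rpow_neg_mul_le_rpow_one_sub {m n γ : ℝ} (hm : 0 < m) (hmn : m ≤ n) (hγ : 0 ≤ γ) :
    n ^ (-γ) * m ≤ m ^ (1 - γ) := by
  rw [sub_eq_neg_add, rpow_add hm, rpow_one]
  exact mul_le_mul_of_nonneg_right (rpow_le_rpow_of_nonpos hm hmn (neg_nonpos.mpr hγ)) hm.le

lemma mul_one_sub_div_le_one_sub_div_rpow {m b α d : ℝ} (hm : 0 < m) (hb : 0 < b)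
    (hα0 : 0 ≤ α) (hα1 : α ≤ 1) (hd : d ≤ m ^ α) :
    α * (1 - m / b) ≤ 1 - d / b ^ α := by
  have hratio : d / b ^ α ≤ (m / b) ^ α := by
    rw [div_rpow hm.le hb.le]
    gcongr
  have hbernoulli : (m / b) ^ α ≤ 1 + α * (m / b - 1) := by
    simpa using rpow_one_add_le_one_add_mul_self (s := m / b - 1) (by linarith [div_pos hm hb])
      hα0 hα1
  linarith

section driftFun

variable {θ γ : ℝ}

lemma driftFun_self (hθ0 : 0 < θ) (hθ1 : θ < 1) :
    driftFun θ γ θ = (θ * (1 - θ)) ^ (1 - γ) := by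
  have hb : 0 < θ * (1 - θ) := mul_pos hθ0 (sub_pos.mpr hθ1)
  rw [driftFun, if_pos le_rfl, ← rpow_add_one hb.ne', neg_add_eq_sub]

lemma exists_driftFun_le_rpow (hθ0 : 0 < θ) (hθ1 : θ < 1) (hγ0 : 0 ≤ γ) {t : ℝ}
    (ht : t ∈ Set.Ioo (0 : ℝ) 1) :
    ∃ m, 0 < m ∧ driftFun θ γ t ≤ m ^ (1 - γ) ∧ |t - θ| ≤ 1 - m / (θ * (1 - θ)) := by
  obtain ⟨ht0, ht1⟩ := ht
  rcases le_or_gt t θ with htθ | hθt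
  · refine ⟨t * (1 - θ), by nlinarith, ?_, ?_⟩
    · rw [driftFun, if_pos htθ]
      exact rpow_neg_mul_le_rpow_one_sub (by nlinarith) (by nlinarith) hγ0
    · rw [mul_div_mul_right _ _ (sub_pos.mpr hθ1).ne', abs_of_nonpos (by linarith),
        one_sub_div hθ0.ne', le_div_iff₀ hθ0]
      nlinarith
  · refine ⟨θ * (1 - t), by nlinarith, ?_, ?_⟩
    · rw [driftFun, if_neg (not_le.mpr hθt)]
      exact rpow_neg_mul_le_rpow_one_sub (by nlinarith) (by nlinarith) hγ0
    · rw [mul_div_mul_left _ _ hθ0.ne', abs_of_pos (by linarith),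
        one_sub_div (sub_pos.mpr hθ1).ne', le_div_iff₀ (sub_pos.mpr hθ1)]
      nlinarith

end driftFun

/-- **Linear drop of the drift function** (the estimate below (4.26)): there exists a
constant `C_h > 0`, depending only on `θ` and `γ`, such that
`1 − h(t)/h(θ) ≥ C_h |t − θ|` for every `t ∈ (0,1)`. -/
theorem driftFun_linear_drop
    (θ γ : ℝ) (hθ0 : 0 < θ) (hθ1 : θ < 1) (hγ0 : 0 ≤ γ) (hγ1 : γ < 1) :
    ∃ Ch : ℝ, 0 < Ch ∧
      ∀ t ∈ Set.Ioo (0 : ℝ) 1, Ch * |t - θ| ≤ 1 - driftFun θ γ t / driftFun θ γ θ := by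
  refine ⟨1 - γ, sub_pos.mpr hγ1, fun t ht => ?_⟩
  obtain ⟨m, hm, hdrift, hdist⟩ := exists_driftFun_le_rpow hθ0 hθ1 hγ0 ht
  rw [driftFun_self hθ0 hθ1]
  calc (1 - γ) * |t - θ| ≤ (1 - γ) * (1 - m / (θ * (1 - θ))) :=
        mul_le_mul_of_nonneg_left hdist (sub_nonneg.mpr hγ1.le)
    _ ≤ 1 - driftFun θ γ t / (θ * (1 - θ)) ^ (1 - γ) :=
        mul_one_sub_div_le_one_sub_div_rpow hm (mul_pos hθ0 (sub_pos.mpr hθ1))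
          (sub_nonneg.mpr hγ1.le) (by linarith) hdrift
end

section
/- The function h is strictly increasing on (0, θ] and strictly decreasing on [θ, 1); consequently, for every η > 0, inf{ h(θ) − h(t) : t ∈ (0,1), |t − θ| > η } > 0. -/
lemma driftFun_eq_left (θ γ t : ℝ) (ht0 : 0 < t) (ht1 : t < 1) (htθ : t ≤ θ) :
    driftFun θ γ t = t ^ (1 - γ) * (1 - t) ^ (-γ) * (1 - θ) := by
  have h1 : (0:ℝ) < 1 - t := by linarith
  have h2 : t ^ (1 - γ) = t ^ (-γ) * t := by
    rw [show (1 - γ) = -γ + 1 by ring, Real.rpow_add ht0, Real.rpow_one]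
  rw [driftFun, if_pos htθ, Real.mul_rpow ht0.le h1.le, h2]
  ring

lemma driftFun_eq_right (θ γ t : ℝ) (ht0 : 0 < t) (ht1 : t < 1) (htθ : θ ≤ t) :
    driftFun θ γ t = (1 - t) ^ (1 - γ) * t ^ (-γ) * θ := by
  have h1 : (0:ℝ) < 1 - t := by linarith
  have h2 : (1 - t) ^ (1 - γ) = (1 - t) ^ (-γ) * (1 - t) := by
    rw [show (1 - γ) = -γ + 1 by ring, Real.rpow_add h1, Real.rpow_one]
  rcases le_or_gt t θ with h | h
  · have : t = θ := le_antisymm h htθ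
    subst this
    rw [driftFun, if_pos le_rfl, Real.mul_rpow ht0.le h1.le, h2]
    ring
  · rw [driftFun, if_neg (not_le.mpr h), Real.mul_rpow ht0.le h1.le, h2]
    ring

/-- **Monotonicity of the drift function**: `h` is strictly increasing on `(0, θ]`,
strictly decreasing on `[θ, 1)`, and consequently for every `η > 0` the quantity
`inf { h(θ) − h(t) : t ∈ (0,1), |t − θ| > η }` is strictly positive. -/
theorem driftFun_strictMono_and_gap
    (θ γ : ℝ) (hθ0 : 0 < θ) (hθ1 : θ < 1) (hγ0 : 0 ≤ γ) (hγ1 : γ < 1) :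
    StrictMonoOn (driftFun θ γ) (Set.Ioc 0 θ) ∧
    StrictAntiOn (driftFun θ γ) (Set.Ico θ 1) ∧
    ∀ η : ℝ, 0 < η → ∃ a : ℝ, 0 < a ∧
      ∀ t ∈ Set.Ioo (0 : ℝ) 1, η < |t - θ| → a ≤ driftFun θ γ θ - driftFun θ γ t := by
  have hmono : StrictMonoOn (driftFun θ γ) (Set.Ioc 0 θ) := by
    intro s hs t ht hst
    have hs0 : 0 < s := hs.1
    have ht0 : 0 < t := ht.1
    have hs1 : s < 1 := lt_of_le_of_lt hs.2 hθ1
    have ht1 : t < 1 := lt_of_le_of_lt ht.2 hθ1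
    rw [driftFun_eq_left θ γ s hs0 hs1 hs.2, driftFun_eq_left θ γ t ht0 ht1 ht.2]
    have A : s ^ (1 - γ) < t ^ (1 - γ) := Real.rpow_lt_rpow hs0.le hst (by linarith)
    have B : (1 - s) ^ (-γ) ≤ (1 - t) ^ (-γ) :=
      Real.rpow_le_rpow_of_nonpos (by linarith) (by linarith) (by linarith)
    have p1 : 0 ≤ s ^ (1 - γ) := Real.rpow_nonneg hs0.le _
    have p2 : 0 < (1 - t) ^ (-γ) := Real.rpow_pos_of_pos (by linarith) _
    have hθ' : (0:ℝ) < 1 - θ := by linarith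
    have step1 : s ^ (1 - γ) * (1 - s) ^ (-γ) ≤ s ^ (1 - γ) * (1 - t) ^ (-γ) :=
      mul_le_mul_of_nonneg_left B p1
    have step2 : s ^ (1 - γ) * (1 - t) ^ (-γ) < t ^ (1 - γ) * (1 - t) ^ (-γ) :=
      mul_lt_mul_of_pos_right A p2
    nlinarith [step1, step2]
  have hanti : StrictAntiOn (driftFun θ γ) (Set.Ico θ 1) := by
    intro s hs t ht hst
    have hs0 : 0 < s := lt_of_lt_of_le hθ0 hs.1
    have ht0 : 0 < t := lt_of_lt_of_le hθ0 ht.1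
    have hs1 : s < 1 := hs.2
    have ht1 : t < 1 := ht.2
    rw [driftFun_eq_right θ γ s hs0 hs1 hs.1, driftFun_eq_right θ γ t ht0 ht1 ht.1]
    have A : (1 - t) ^ (1 - γ) < (1 - s) ^ (1 - γ) :=
      Real.rpow_lt_rpow (by linarith) (by linarith) (by linarith)
    have B : t ^ (-γ) ≤ s ^ (-γ) :=
      Real.rpow_le_rpow_of_nonpos hs0 hst.le (by linarith)
    have p1 : 0 ≤ (1 - t) ^ (1 - γ) := Real.rpow_nonneg (by linarith) _
    have p2 : 0 < s ^ (-γ) := Real.rpow_pos_of_pos hs0 _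
    have step1 : (1 - t) ^ (1 - γ) * t ^ (-γ) ≤ (1 - t) ^ (1 - γ) * s ^ (-γ) :=
      mul_le_mul_of_nonneg_left B p1
    have step2 : (1 - t) ^ (1 - γ) * s ^ (-γ) < (1 - s) ^ (1 - γ) * s ^ (-γ) :=
      mul_lt_mul_of_pos_right A p2
    nlinarith [step1, step2]
  refine ⟨hmono, hanti, ?_⟩
  intro η hη
  set δ := min η (min θ (1 - θ) / 2) with hδdef
  have hδ0 : 0 < δ := by
    apply lt_min hη
    have : 0 < min θ (1 - θ) := lt_min hθ0 (by linarith)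
    linarith
  have hδη : δ ≤ η := min_le_left _ _
  have hδθ : δ < θ := by
    have h1 : δ ≤ min θ (1 - θ) / 2 := min_le_right _ _
    have h2 : min θ (1 - θ) ≤ θ := min_le_left _ _
    linarith
  have hδθ' : δ < 1 - θ := by
    have h1 : δ ≤ min θ (1 - θ) / 2 := min_le_right _ _
    have h2 : min θ (1 - θ) ≤ 1 - θ := min_le_right _ _
    linarith
  have hθmem : θ ∈ Set.Ioc (0:ℝ) θ := ⟨hθ0, le_rfl⟩
  have hθmem' : θ ∈ Set.Ico θ (1:ℝ) := ⟨le_rfl, hθ1⟩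
  have hs₁ : θ - δ ∈ Set.Ioc (0:ℝ) θ := ⟨by linarith, by linarith⟩
  have hs₂ : θ + δ ∈ Set.Ico θ (1:ℝ) := ⟨by linarith, by linarith⟩
  have hg₁ : driftFun θ γ (θ - δ) < driftFun θ γ θ := hmono hs₁ hθmem (by linarith)
  have hg₂ : driftFun θ γ (θ + δ) < driftFun θ γ θ := hanti hθmem' hs₂ (by linarith)
  refine ⟨min (driftFun θ γ θ - driftFun θ γ (θ - δ))
      (driftFun θ γ θ - driftFun θ γ (θ + δ)), lt_min (by linarith) (by linarith), ?_⟩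
  intro t ht habs
  rcases lt_abs.mp habs with h | h
  · -- t - θ > η, so t > θ + η ≥ θ + δ
    have htθ : θ + δ < t := by linarith
    have hlt : driftFun θ γ t < driftFun θ γ (θ + δ) :=
      hanti hs₂ ⟨by linarith, ht.2⟩ htθ
    have := min_le_right (driftFun θ γ θ - driftFun θ γ (θ - δ))
      (driftFun θ γ θ - driftFun θ γ (θ + δ))
    linarith
  · -- θ - t > η, so t < θ - δ
    have htθ : t < θ - δ := by linarith
    have hlt : driftFun θ γ t < driftFun θ γ (θ - δ) :=
      hmono ⟨ht.1, by linarith⟩ hs₁ htθ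
    have := min_le_left (driftFun θ γ θ - driftFun θ γ (θ - δ))
      (driftFun θ γ θ - driftFun θ γ (θ + δ))
    linarith
end

section
/- If |b_k^{(1)}| + |b_k^{(2)}| ≤ C·|k|^{−β} for all k ≠ 0, where C > 0 and β > 1/2, then the series defining X_i^{(j)} converges in L² and there exists a constant C₂ > 0, depending only on C, β, q and σ, such that E[(X_i^{(j)} − X_i^{(j),v})²] ≤ C₂·v^{−(2β−1)} for all i, for j = 1, 2 and for all integers v ≥ 1. -/
/-!
Innovations more than `q` apart are independent and centred, hence uncorrelated, so the second
moment of a finite sum `∑ c_k ε_{i-k}` is at most `σ² (2q+1) ∑ c_k²`. For `|c_k| ≤ C |k|^{-β}`,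
comparison with `∫ x^{-2β} dx` bounds `∑_{|k| ≥ u} c_k²` by a multiple of `u^{1-2β}`. The
symmetric partial sums are therefore Cauchy in `L²` at that rate, and their limit `X_i`
inherits the rate.
-/

open MeasureTheory Filter Finset Topology

theorem sum_Icc_rpow_neg_le {p : ℝ} (hp : 1 < p) {v : ℕ} (hv : 1 ≤ v) (w : ℕ) :
    ∑ n ∈ Icc v w, (n : ℝ) ^ (-p) ≤ p / (p - 1) * (v : ℝ) ^ (1 - p) := by
  have hv0 : (0 : ℝ) < v := by exact_mod_cast hv
  have hbound : (v : ℝ) ^ (1 - p) + (v : ℝ) ^ (1 - p) / (p - 1) =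
      p / (p - 1) * (v : ℝ) ^ (1 - p) := by
    field_simp [show p - 1 ≠ 0 by linarith]; ring
  have hpos : 0 ≤ (v : ℝ) ^ (1 - p) / (p - 1) :=
    div_nonneg (Real.rpow_nonneg hv0.le _) (by linarith)
  rcases lt_or_ge w v with hwv | hvw
  · rw [Icc_eq_empty_of_lt hwv, sum_empty, ← hbound]
    exact add_nonneg (Real.rpow_nonneg hv0.le _) hpos
  have hhead : (v : ℝ) ^ (-p) ≤ (v : ℝ) ^ (1 - p) :=
    Real.rpow_le_rpow_of_exponent_le (by exact_mod_cast hv) (by linarith)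
  have hanti : AntitoneOn (fun x : ℝ => x ^ (-p)) (Set.Icc (v : ℝ) w) := fun x hx y _ hxy =>
    Real.rpow_le_rpow_of_nonpos (hv0.trans_le hx.1) hxy (by linarith)
  have hint : ∫ x in (v : ℝ)..w, x ^ (-p) ≤ (v : ℝ) ^ (1 - p) / (p - 1) := by
    have hw0 : (0 : ℝ) < w := by exact_mod_cast (hv.trans hvw)
    rw [integral_rpow (Or.inr ⟨by linarith, fun h0 => ?_⟩)]
    · rw [show -p + 1 = 1 - p by ring, ← neg_div_neg_eq, neg_sub, neg_sub]
      exact div_le_div_of_nonneg_right (by linarith [Real.rpow_nonneg hw0.le (1 - p)])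
        (by linarith)
    · rw [Set.mem_uIcc] at h0
      rcases h0 with h | h <;> linarith [h.1, h.2]
  have hsplit : ∑ n ∈ Icc v w, (n : ℝ) ^ (-p) =
      (v : ℝ) ^ (-p) + ∑ i ∈ Ico v w, ((i + 1 : ℕ) : ℝ) ^ (-p) := by
    rw [← Ico_add_one_right_eq_Icc, sum_eq_sum_Ico_succ_bot (by omega),
      sum_Ico_add' (fun n : ℕ => (n : ℝ) ^ (-p))]
  linarith [hanti.sum_le_integral_Ico hvw]

theorem card_filter_natAbs_eq_le_two (S : Finset ℤ) (n : ℕ) :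
    #{k ∈ S | k.natAbs = n} ≤ 2 :=
  calc #{k ∈ S | k.natAbs = n} ≤ #{(n : ℤ), -(n : ℤ)} :=
        card_le_card fun k hk => by
          rcases Int.natAbs_eq_iff.1 (mem_filter.1 hk).2 with h | h <;> simp [h]
    _ ≤ 2 := card_le_two

theorem sum_abs_rpow_neg_le {p : ℝ} (hp : 1 < p) {u : ℕ} (hu : 1 ≤ u) (S : Finset ℤ)
    (hS : ∀ k ∈ S, (u : ℤ) ≤ |k|) :
    ∑ k ∈ S, |(k : ℝ)| ^ (-p) ≤ 2 * (p / (p - 1)) * (u : ℝ) ^ (1 - p) := by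
  have hmaps : ∀ k ∈ S, k.natAbs ∈ Icc u (S.sup Int.natAbs) := fun k hk =>
    mem_Icc.2 ⟨by have := hS k hk; rw [Int.abs_eq_natAbs] at this; omega, le_sup hk⟩
  calc ∑ k ∈ S, |(k : ℝ)| ^ (-p)
      = ∑ n ∈ Icc u (S.sup Int.natAbs), ∑ k ∈ S with k.natAbs = n, (n : ℝ) ^ (-p) := by
        rw [← sum_fiberwise_of_maps_to hmaps]
        refine sum_congr rfl fun n _ => sum_congr rfl fun k hk => ?_
        rw [← (mem_filter.1 hk).2, Nat.cast_natAbs, Int.cast_abs]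
    _ ≤ ∑ n ∈ Icc u (S.sup Int.natAbs), 2 * (n : ℝ) ^ (-p) := by
        refine sum_le_sum fun n _ => ?_
        rw [sum_const, nsmul_eq_mul]
        gcongr
        exact_mod_cast card_filter_natAbs_eq_le_two S n
    _ ≤ 2 * (p / (p - 1)) * (u : ℝ) ^ (1 - p) := by
        rw [← mul_sum, mul_assoc]
        gcongr
        exact sum_Icc_rpow_neg_le hp hu _

theorem sum_sq_le_of_abs_le_rpow {c : ℤ → ℝ} {C β : ℝ} (hβ : 1 / 2 < β)
    (hc : ∀ k : ℤ, k ≠ 0 → |c k| ≤ C * |(k : ℝ)| ^ (-β)) {u : ℕ} (hu : 1 ≤ u) (S : Finset ℤ)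
    (hS : ∀ k ∈ S, (u : ℤ) ≤ |k|) :
    ∑ k ∈ S, c k ^ 2 ≤ C ^ 2 * (2 * (2 * β / (2 * β - 1))) * (u : ℝ) ^ (1 - 2 * β) := by
  have hsq : ∀ k ∈ S, c k ^ 2 ≤ C ^ 2 * |(k : ℝ)| ^ (-(2 * β)) := fun k hk => by
    have hk : k ≠ 0 := by rintro rfl; have := hS 0 hk; simp at this; omega
    calc c k ^ 2 = |c k| ^ 2 := (sq_abs _).symm
      _ ≤ (C * |(k : ℝ)| ^ (-β)) ^ 2 := pow_le_pow_left₀ (abs_nonneg _) (hc k hk) 2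
      _ = C ^ 2 * |(k : ℝ)| ^ (-(2 * β)) := by
        rw [mul_pow, ← Real.rpow_natCast (_ ^ (-β)), ← Real.rpow_mul (abs_nonneg _)]
        ring_nf
  calc ∑ k ∈ S, c k ^ 2 ≤ C ^ 2 * ∑ k ∈ S, |(k : ℝ)| ^ (-(2 * β)) := by
        rw [mul_sum]; exact sum_le_sum hsq
    _ ≤ C ^ 2 * (2 * (2 * β / (2 * β - 1))) * (u : ℝ) ^ (1 - 2 * β) := by
        rw [mul_assoc]
        gcongr
        exact sum_abs_rpow_neg_le (by linarith) hu S hS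

theorem card_filter_abs_sub_le (S : Finset ℤ) (k : ℤ) (q : ℕ) :
    #{l ∈ S | |k - l| ≤ q} ≤ 2 * q + 1 :=
  calc #{l ∈ S | |k - l| ≤ q} ≤ #(Icc (k - q) (k + q)) :=
        card_le_card fun l hl => by
          have := abs_le.1 (mem_filter.1 hl).2
          exact mem_Icc.2 ⟨by omega, by omega⟩
    _ = 2 * q + 1 := by rw [Int.card_Icc]; omega

theorem sum_sum_ite_abs_sub_le (S : Finset ℤ) (q : ℕ) {d : ℤ → ℝ} (hd : ∀ k, 0 ≤ d k) :
    ∑ k ∈ S, ∑ l ∈ S, (if |k - l| ≤ q then d k else 0) ≤ (2 * q + 1) * ∑ k ∈ S, d k := by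
  rw [mul_sum]
  refine sum_le_sum fun k _ => ?_
  rw [← sum_filter, sum_const, nsmul_eq_mul]
  gcongr
  · exact hd k
  · exact_mod_cast card_filter_abs_sub_le S k q

theorem sum_sum_mul_mul_le_of_banded {r : ℤ → ℤ → ℝ} {s : ℝ} {q : ℕ}
    (hfar : ∀ k l, (q : ℤ) < |k - l| → r k l = 0) (hnear : ∀ k l, |r k l| ≤ s)
    (c : ℤ → ℝ) (S : Finset ℤ) :
    ∑ k ∈ S, ∑ l ∈ S, c k * c l * r k l ≤ s * (2 * q + 1) * ∑ k ∈ S, c k ^ 2 := by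
  have hs : 0 ≤ s := (abs_nonneg _).trans (hnear 0 0)
  set band : ℤ → ℤ → ℝ := fun k l => if |k - l| ≤ q then s * c k ^ 2 / 2 else 0
  -- AM-GM on each entry of the band, half charged to its row and half to its column
  have hterm : ∀ k l, c k * c l * r k l ≤ band k l + band l k := by
    intro k l
    by_cases h : |k - l| ≤ q
    · simp only [band, if_pos h, if_pos (abs_sub_comm k l ▸ h)]
      nlinarith [abs_le.1 (hnear k l), sq_nonneg (c k - c l), sq_nonneg (c k + c l)]
    · simp [band, h, abs_sub_comm l k, hfar k l (not_le.1 h)]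
  calc ∑ k ∈ S, ∑ l ∈ S, c k * c l * r k l
      ≤ ∑ k ∈ S, ∑ l ∈ S, (band k l + band l k) :=
        sum_le_sum fun k _ => sum_le_sum fun l _ => hterm k l
    _ = 2 * ∑ k ∈ S, ∑ l ∈ S, band k l := by
        simp only [sum_add_distrib]
        rw [sum_comm (f := fun k l => band l k)]
        ring
    _ ≤ 2 * ((2 * q + 1) * ∑ k ∈ S, s * c k ^ 2 / 2) := by
        gcongr
        exact sum_sum_ite_abs_sub_le S q fun k => by positivity
    _ = s * (2 * q + 1) * ∑ k ∈ S, c k ^ 2 := by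
        rw [mul_sum, mul_sum, mul_sum]
        exact sum_congr rfl fun k _ => by ring

theorem exists_tendsto_dist_le_of_dist_le {M : Type*} [PseudoMetricSpace M] [CompleteSpace M]
    {u : ℕ → M} {r : ℕ → ℝ} (hr : Tendsto r atTop (𝓝 0))
    (hu : ∀ v w, v ≤ w → dist (u v) (u w) ≤ r v) :
    ∃ L, Tendsto u atTop (𝓝 L) ∧ ∀ v, dist (u v) L ≤ r v := by
  obtain ⟨L, hL⟩ := cauchySeq_tendsto_of_complete (cauchySeq_of_le_tendsto_0' r hu hr)
  exact ⟨L, hL, fun v => le_of_tendsto (tendsto_const_nhds.dist hL)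
    (eventually_atTop.2 ⟨v, hu v⟩)⟩

section

variable {Ω : Type*} [MeasurableSpace Ω] {μ : Measure Ω}

theorem abs_integral_mul_le_of_integral_sq_le {f g : Ω → ℝ} {s : ℝ}
    (hf : MemLp f 2 μ) (hg : MemLp g 2 μ)
    (hf2 : ∫ ω, f ω ^ 2 ∂μ ≤ s) (hg2 : ∫ ω, g ω ^ 2 ∂μ ≤ s) :
    |∫ ω, f ω * g ω ∂μ| ≤ s :=
  calc |∫ ω, f ω * g ω ∂μ| ≤ ∫ ω, |f ω * g ω| ∂μ := abs_integral_le_integral_abs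
    _ ≤ ∫ ω, (f ω ^ 2 + g ω ^ 2) / 2 ∂μ := by
        refine integral_mono (hf.integrable_mul hg).abs
          ((hf.integrable_sq.add hg.integrable_sq).div_const 2) fun ω => ?_
        rw [abs_mul]
        nlinarith [sq_nonneg (|f ω| - |g ω|), sq_abs (f ω), sq_abs (g ω)]
    _ ≤ s := by
        rw [integral_div, integral_add hf.integrable_sq hg.integrable_sq]
        linarith

theorem integral_sq_sum_eq {e : ℤ → Ω → ℝ} (he : ∀ k, MemLp (e k) 2 μ) (c : ℤ → ℝ)
    (S : Finset ℤ) :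
    ∫ ω, (∑ k ∈ S, c k * e k ω) ^ 2 ∂μ =
      ∑ k ∈ S, ∑ l ∈ S, c k * c l * ∫ ω, e k ω * e l ω ∂μ := by
  have hint : ∀ k l, Integrable (fun ω => c k * c l * (e k ω * e l ω)) μ := fun k l =>
    ((he k).integrable_mul (he l)).const_mul _
  have hexpand : ∀ ω, (∑ k ∈ S, c k * e k ω) ^ 2 =
      ∑ k ∈ S, ∑ l ∈ S, c k * c l * (e k ω * e l ω) := fun ω => by
    rw [sq, sum_mul_sum]
    exact sum_congr rfl fun k _ => sum_congr rfl fun l _ => by ring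
  simp_rw [hexpand, ← integral_const_mul]
  rw [integral_finsetSum _ fun k _ => integrable_finsetSum _ fun l _ => hint k l]
  exact sum_congr rfl fun k _ => integral_finsetSum _ fun l _ => hint k l

theorem integral_sq_sum_le_of_banded {e : ℤ → Ω → ℝ} {s : ℝ} {q : ℕ}
    (he : ∀ k, MemLp (e k) 2 μ) (he2 : ∀ k, ∫ ω, e k ω ^ 2 ∂μ ≤ s)
    (hfar : ∀ k l, (q : ℤ) < |k - l| → ∫ ω, e k ω * e l ω ∂μ = 0) (c : ℤ → ℝ) (S : Finset ℤ) :
    ∫ ω, (∑ k ∈ S, c k * e k ω) ^ 2 ∂μ ≤ s * (2 * q + 1) * ∑ k ∈ S, c k ^ 2 := by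
  rw [integral_sq_sum_eq he]
  exact sum_sum_mul_mul_le_of_banded hfar
    (fun k l => abs_integral_mul_le_of_integral_sq_le (he k) (he l) (he2 k) (he2 l)) c S

theorem integral_sq_sum_le_of_banded_of_abs_le_rpow {e : ℤ → Ω → ℝ} {s : ℝ} {q : ℕ}
    (he : ∀ k, MemLp (e k) 2 μ) (he2 : ∀ k, ∫ ω, e k ω ^ 2 ∂μ ≤ s)
    (hfar : ∀ k l, (q : ℤ) < |k - l| → ∫ ω, e k ω * e l ω ∂μ = 0)
    {c : ℤ → ℝ} {C β : ℝ} (hβ : 1 / 2 < β) (hc : ∀ k : ℤ, k ≠ 0 → |c k| ≤ C * |(k : ℝ)| ^ (-β))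
    {u : ℕ} (hu : 1 ≤ u) (S : Finset ℤ) (hS : ∀ k ∈ S, (u : ℤ) ≤ |k|) :
    ∫ ω, (∑ k ∈ S, c k * e k ω) ^ 2 ∂μ ≤
      s * (2 * q + 1) * (C ^ 2 * (2 * (2 * β / (2 * β - 1)))) * (u : ℝ) ^ (1 - 2 * β) := by
  have hs : 0 ≤ s := (integral_nonneg fun ω => sq_nonneg (e 0 ω)).trans (he2 0)
  calc _ ≤ s * (2 * q + 1) * ∑ k ∈ S, c k ^ 2 := integral_sq_sum_le_of_banded he he2 hfar c S
    _ ≤ _ := by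
        rw [mul_assoc _ (C ^ 2 * _)]
        gcongr
        exact sum_sq_le_of_abs_le_rpow hβ hc hu S hS

theorem indepFun_of_indepFun_blocks {ε : Fin 2 → ℤ → Ω → ℝ} {a b : ℤ}
    (hdep : ProbabilityTheory.IndepFun
      (fun ω => fun k : {k : ℤ // k ≤ a} => (ε 0 k ω, ε 1 k ω))
      (fun ω => fun k : {k : ℤ // b ≤ k} => (ε 0 k ω, ε 1 k ω)) μ) (j : Fin 2) :
    ProbabilityTheory.IndepFun (ε j a) (ε j b) μ := by
  fin_cases j
  · exact hdep.comp (φ := fun x => (x ⟨a, le_rfl⟩).1) (ψ := fun x => (x ⟨b, le_rfl⟩).1)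
      (measurable_pi_apply _).fst (measurable_pi_apply _).fst
  · exact hdep.comp (φ := fun x => (x ⟨a, le_rfl⟩).2) (ψ := fun x => (x ⟨b, le_rfl⟩).2)
      (measurable_pi_apply _).snd (measurable_pi_apply _).snd

theorem integral_mul_eq_zero_of_indepFun_blocks {ε : Fin 2 → ℤ → Ω → ℝ} {q : ℕ}
    (hε : ∀ j k, AEStronglyMeasurable (ε j k) μ) (hmean : ∀ j k, ∫ ω, ε j k ω ∂μ = 0)
    (hdep : ∀ a b : ℤ, (q : ℤ) < b - a →
      ProbabilityTheory.IndepFun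
        (fun ω => fun k : {k : ℤ // k ≤ a} => (ε 0 k ω, ε 1 k ω))
        (fun ω => fun k : {k : ℤ // b ≤ k} => (ε 0 k ω, ε 1 k ω)) μ)
    (j : Fin 2) {a b : ℤ} (hab : (q : ℤ) < |a - b|) :
    ∫ ω, ε j a ω * ε j b ω ∂μ = 0 := by
  rcases lt_abs.1 hab with h | h
  · rw [(indepFun_of_indepFun_blocks (hdep b a (by linarith)) j).symm
      |>.integral_fun_mul_eq_mul_integral (hε j a) (hε j b), hmean, zero_mul]
  · rw [(indepFun_of_indepFun_blocks (hdep a b (by linarith)) j)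
      |>.integral_fun_mul_eq_mul_integral (hε j a) (hε j b), hmean, zero_mul]

theorem integral_sq_sub_eq_dist_toLp_sq {f g : Ω → ℝ} (hf : MemLp f 2 μ) (hg : MemLp g 2 μ) :
    ∫ ω, (f ω - g ω) ^ 2 ∂μ = dist (hf.toLp f) (hg.toLp g) ^ 2 := by
  rw [dist_eq_norm, ← MemLp.toLp_sub, ← real_inner_self_eq_norm_sq, L2.inner_def]
  refine integral_congr_ae ?_
  filter_upwards [(hf.sub hg).coeFn_toLp] with ω hω
  simp [hω, sq]

theorem exists_tendsto_eLpNorm_of_integral_sq_sub_le {F : ℕ → Ω → ℝ}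
    (hF : ∀ v, MemLp (F v) 2 μ) {r : ℕ → ℝ} (hr : Tendsto r atTop (𝓝 0))
    (h : ∀ v w, v ≤ w → ∫ ω, (F w ω - F v ω) ^ 2 ∂μ ≤ r v) :
    ∃ X : Ω → ℝ, Tendsto (fun v => eLpNorm (fun ω => X ω - F v ω) 2 μ) atTop (𝓝 0) ∧
      ∀ v, ∫ ω, (X ω - F v ω) ^ 2 ∂μ ≤ r v := by
  have hdist : ∀ v w, v ≤ w → dist ((hF v).toLp (F v)) ((hF w).toLp (F w)) ≤ √(r v) :=
    fun v w hvw => Real.le_sqrt_of_sq_le <| by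
      rw [dist_comm, ← integral_sq_sub_eq_dist_toLp_sq]
      exact h v w hvw
  have hsqrt : Tendsto (fun v => √(r v)) atTop (𝓝 0) := by
    simpa using hr.sqrt
  obtain ⟨L, hlim, hL⟩ := exists_tendsto_dist_le_of_dist_le hsqrt hdist
  have hX : (Lp.memLp L).toLp L = L := Lp.toLp_coeFn L (Lp.memLp L)
  refine ⟨L, ?_, fun v => ?_⟩
  · refine (tendsto_iff_edist_tendsto_0.1 hlim).congr fun v => ?_
    rw [edist_comm]
    conv_lhs => rw [← hX]
    exact Lp.edist_toLp_toLp _ _ _ _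
  · rw [integral_sq_sub_eq_dist_toLp_sq (Lp.memLp L) (hF v), hX, dist_comm]
    exact (Real.le_sqrt dist_nonneg (by simpa using h v v le_rfl)).1 (hL v)

theorem exists_tendsto_eLpNorm_sub_sum_Icc {e : ℤ → Ω → ℝ} (he : ∀ k, MemLp (e k) 2 μ)
    {r : ℕ → ℝ} (hr : Tendsto r atTop (𝓝 0))
    (htail : ∀ (v : ℕ) (S : Finset ℤ), (∀ k ∈ S, (v : ℤ) < |k|) →
      ∫ ω, (∑ k ∈ S, e k ω) ^ 2 ∂μ ≤ r v) :
    ∃ X : Ω → ℝ,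
      Tendsto (fun v : ℕ => eLpNorm (fun ω => X ω - ∑ k ∈ Icc (-(v : ℤ)) v, e k ω) 2 μ)
        atTop (𝓝 0) ∧
      ∀ v : ℕ, ∫ ω, (X ω - ∑ k ∈ Icc (-(v : ℤ)) v, e k ω) ^ 2 ∂μ ≤ r v := by
  refine exists_tendsto_eLpNorm_of_integral_sq_sub_le
    (fun v => memLp_finsetSum _ fun k _ => he k) hr fun v w hvw => ?_
  have hsub : Icc (-(v : ℤ)) v ⊆ Icc (-(w : ℤ)) w := Icc_subset_Icc (by omega) (by omega)
  simp_rw [← sum_sdiff_eq_sub hsub]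
  refine htail v _ fun k hk => ?_
  simp only [Finset.mem_sdiff, mem_Icc] at hk
  rcases abs_cases k with ⟨h, _⟩ | ⟨h, _⟩ <;> omega

end

theorem linear_process_truncation_L2_bound_general
    (C β : ℝ) (q : ℕ) (σ : ℝ) (hβ : 1 / 2 < β) :
    ∃ C₂ : ℝ, 0 < C₂ ∧
      ∀ (Ω : Type*) [MeasurableSpace Ω] (ℙ : Measure Ω) [IsProbabilityMeasure ℙ]
        (ε : Fin 2 → ℤ → Ω → ℝ),
        (∀ j k, Measurable (ε j k)) →
        (∀ j k, MemLp (ε j k) 2 ℙ) →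
        (∀ j k, ∫ ω, ε j k ω ∂ℙ = 0) →
        -- stationarity
        (∀ a : ℤ,
          Measure.map (fun ω => fun k : ℤ => (ε 0 (k + a) ω, ε 1 (k + a) ω)) ℙ =
            Measure.map (fun ω => fun k : ℤ => (ε 0 k ω, ε 1 k ω)) ℙ) →
        -- `q`-dependence
        (∀ a b' : ℤ, (q : ℤ) < b' - a →
          ProbabilityTheory.IndepFun
            (fun ω => fun k : {k : ℤ // k ≤ a} => (ε 0 k ω, ε 1 k ω))
            (fun ω => fun k : {k : ℤ // b' ≤ k} => (ε 0 k ω, ε 1 k ω)) ℙ) →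
        -- uniformly bounded second moments
        (∀ j k, ∫ ω, (ε j k ω) ^ 2 ∂ℙ ≤ σ ^ 2) →
        ∀ b : Fin 2 → ℤ → ℝ,
        -- polynomial decay of the coefficients
        (∀ k : ℤ, k ≠ 0 → |b 0 k| + |b 1 k| ≤ C * |(k : ℝ)| ^ (-β)) →
        ∃ X : Fin 2 → ℤ → Ω → ℝ,
          -- the series defining `X_i^{(j)}` converges in `L²`
          (∀ j (i : ℤ), Tendsto (fun v : ℕ =>
              eLpNorm (fun ω => X j i ω -
                ∑ k ∈ Finset.Icc (-(v : ℤ)) (v : ℤ), b j k * ε j (i - k) ω) 2 ℙ)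
            atTop (nhds 0)) ∧
          -- the truncation error bound, `X_i^{(j),v} = Σ_{|k|<v} b_k^{(j)} ε_{i−k}^{(j)}`
          ∀ j (i : ℤ) (v : ℕ), 1 ≤ v →
            ∫ ω, (X j i ω -
                ∑ k ∈ Finset.Ioo (-(v : ℤ)) (v : ℤ), b j k * ε j (i - k) ω) ^ 2 ∂ℙ ≤
              C₂ * (v : ℝ) ^ (-(2 * β - 1)) := by
  have h2β : 0 < 2 * β - 1 := by linarith
  set D := σ ^ 2 * (2 * q + 1) * (C ^ 2 * (2 * (2 * β / (2 * β - 1))))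
  refine ⟨D + 1, by positivity, fun Ω _ ℙ _ ε _ hε hmean _ hdep hσ b hb => ?_⟩
  have hdecay : ∀ j k, k ≠ 0 → |b j k| ≤ C * |(k : ℝ)| ^ (-β) := fun j k hk => by
    fin_cases j <;> simp <;> linarith [hb k hk, abs_nonneg (b 0 k), abs_nonneg (b 1 k)]
  have hrate : Tendsto (fun v : ℕ => D * ((v : ℝ) + 1) ^ (1 - 2 * β)) atTop (𝓝 0) := by
    have := (tendsto_rpow_neg_atTop h2β).comp
      (tendsto_atTop_add_const_right atTop 1 tendsto_natCast_atTop_atTop)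
    simpa [neg_sub] using this.const_mul D
  choose X hXlim hXbound using fun j i => exists_tendsto_eLpNorm_sub_sum_Icc
    (fun k => (hε j (i - k)).const_mul (b j k)) hrate fun v S hS => by
      have := integral_sq_sum_le_of_banded_of_abs_le_rpow (fun k => hε j (i - k))
        (fun k => hσ j (i - k)) (fun k l h => integral_mul_eq_zero_of_indepFun_blocks
          (fun j k => (hε j k).1) hmean hdep j (by rwa [sub_sub_sub_cancel_left, abs_sub_comm]))
        hβ (hdecay j) (u := v + 1) (by omega) S fun k hk => by have := hS k hk; omega
      push_cast at this
      exact this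
  refine ⟨X, hXlim, fun j i v hv => ?_⟩
  obtain ⟨n, rfl⟩ : ∃ n, v = n + 1 := ⟨v - 1, by omega⟩
  have hIoo : Ioo (-((n + 1 : ℕ) : ℤ)) ((n + 1 : ℕ) : ℤ) = Icc (-(n : ℤ)) n := by
    ext k; simp only [mem_Ioo, mem_Icc]; omega
  rw [hIoo]
  calc _ ≤ D * ((n : ℝ) + 1) ^ (1 - 2 * β) := hXbound j i n
    _ ≤ (D + 1) * ((n + 1 : ℕ) : ℝ) ^ (-(2 * β - 1)) := by
        rw [neg_sub, Nat.cast_succ]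
        gcongr
        linarith

/-- **Truncation error bound for linear processes with `q`-dependent innovations**
(Example 6, estimate (2.19)): if `|b_k^{(1)}| + |b_k^{(2)}| ≤ C |k|^{−β}` with
`β > 1/2`, then the series defining `X_i^{(j)}` converges in `L²` and
`E[(X_i^{(j)} − X_i^{(j),v})²] ≤ C₂ v^{−(2β−1)}` with `C₂` depending only on
`C`, `β`, `q` and `σ`. -/
theorem linear_process_truncation_L2_bound
    (C β : ℝ) (q : ℕ) (σ : ℝ) (hC : 0 < C) (hβ : 1 / 2 < β) (hσ : 0 ≤ σ) :
    ∃ C₂ : ℝ, 0 < C₂ ∧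
      ∀ (Ω : Type*) [MeasurableSpace Ω] (ℙ : Measure Ω) [IsProbabilityMeasure ℙ]
        (ε : Fin 2 → ℤ → Ω → ℝ),
        (∀ j k, Measurable (ε j k)) →
        (∀ j k, MemLp (ε j k) 2 ℙ) →
        (∀ j k, ∫ ω, ε j k ω ∂ℙ = 0) →
        -- stationarity
        (∀ a : ℤ,
          Measure.map (fun ω => fun k : ℤ => (ε 0 (k + a) ω, ε 1 (k + a) ω)) ℙ =
            Measure.map (fun ω => fun k : ℤ => (ε 0 k ω, ε 1 k ω)) ℙ) →
        -- `q`-dependence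
        (∀ a b' : ℤ, (q : ℤ) < b' - a →
          ProbabilityTheory.IndepFun
            (fun ω => fun k : {k : ℤ // k ≤ a} => (ε 0 k ω, ε 1 k ω))
            (fun ω => fun k : {k : ℤ // b' ≤ k} => (ε 0 k ω, ε 1 k ω)) ℙ) →
        -- uniformly bounded second moments
        (∀ j k, ∫ ω, (ε j k ω) ^ 2 ∂ℙ ≤ σ ^ 2) →
        ∀ b : Fin 2 → ℤ → ℝ,
        -- polynomial decay of the coefficients
        (∀ k : ℤ, k ≠ 0 → |b 0 k| + |b 1 k| ≤ C * |(k : ℝ)| ^ (-β)) →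
        ∃ X : Fin 2 → ℤ → Ω → ℝ,
          -- the series defining `X_i^{(j)}` converges in `L²`
          (∀ j (i : ℤ), Tendsto (fun v : ℕ =>
              eLpNorm (fun ω => X j i ω -
                ∑ k ∈ Finset.Icc (-(v : ℤ)) (v : ℤ), b j k * ε j (i - k) ω) 2 ℙ)
            atTop (nhds 0)) ∧
          -- the truncation error bound, `X_i^{(j),v} = Σ_{|k|<v} b_k^{(j)} ε_{i−k}^{(j)}`
          ∀ j (i : ℤ) (v : ℕ), 1 ≤ v →
            ∫ ω, (X j i ω -
                ∑ k ∈ Finset.Ioo (-(v : ℤ)) (v : ℤ), b j k * ε j (i - k) ω) ^ 2 ∂ℙ ≤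
              C₂ * (v : ℝ) ^ (-(2 * β - 1)) :=
  linear_process_truncation_L2_bound_general C β q σ hβ
end
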